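/- Let f_a(z) = λ z + a z² + z³ and P_c(z) = λ z (1 - (1/2)(1 + 1/c) z + z²/(3c)). For c ∈ ℂ* and a ∈ ℂ, there exists β ∈ ℂ* with β · P_c(z) = f_a(β z) for all z if and only if a² = (3λ/4)(c + 1/c + 2). -/

import Mathlib

open Complex

/-- The critically marked cubic Siegel polynomial
`P_c(z) = e^{2πiθ} z (1 - (1/2)(1 + 1/c) z + z²/(3c))`. -/
noncomputable def cubicP (θ : ℝ) (c z : ℂ) : ℂ :=
  exp (2 * Real.pi * I * θ) * z * (1 - (1/2) * (1 + 1/c) * z + z^2 / (3*c))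

/-- The cubic polynomial `f_a(z) = e^{2πiθ} z + a z² + z³`. -/
noncomputable def cubicF (θ : ℝ) (a z : ℂ) : ℂ :=
  exp (2 * Real.pi * I * θ) * z + a * z^2 + z^3

/-!
Comparing coefficients, `β P_c(z) = f_a(β z)` says exactly that `a β` and `β²` are the rescaled
quadratic and cubic coefficients of `P_c`, namely `-λ(c + 1)/(2c)` and `λ/(3c)`. Squaring the first
condition and substituting the second eliminates `β`; conversely, a square root `β` of `λ/(3c)`
satisfies the first condition up to the sign of `β`.
-/

section CubicConjugacy

variable {K : Type*} [Field K]

theorem forall_mul_cubic_eq_cubic_mul_iff [NeZero (2 : K)] {l p q a β : K} (hβ : β ≠ 0) :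
    (∀ z, β * (l * z + p * z ^ 2 + q * z ^ 3) = l * (β * z) + a * (β * z) ^ 2 + (β * z) ^ 3) ↔
      a * β = p ∧ β ^ 2 = q := by
  constructor
  · intro h
    -- the even and odd parts of the identity at `z = ±1` isolate the `z²` and `z³` coefficients
    have h₁ := h 1
    have h₂ := h (-1)
    have hp : 2 * (a * β * β) = 2 * (p * β) := by linear_combination -h₁ - h₂
    have hq : 2 * (β ^ 2 * β) = 2 * (q * β) := by linear_combination -h₁ + h₂
    exact ⟨mul_right_cancel₀ hβ (mul_left_cancel₀ two_ne_zero hp),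
      mul_right_cancel₀ hβ (mul_left_cancel₀ two_ne_zero hq)⟩
  · rintro ⟨hp, hq⟩ z
    linear_combination (-β * z ^ 2) * hp + (-β * z ^ 3) * hq

theorem exists_mul_eq_and_sq_eq_iff [IsAlgClosed K] {a p q : K} (hq : q ≠ 0) :
    (∃ β, β ≠ 0 ∧ a * β = p ∧ β ^ 2 = q) ↔ a ^ 2 * q = p ^ 2 := by
  constructor
  · rintro ⟨β, -, rfl, rfl⟩
    ring
  · intro h
    obtain ⟨β, hβ⟩ := IsAlgClosed.exists_pow_nat_eq q two_pos
    have hβ₀ : β ≠ 0 := by rintro rfl; simp [eq_comm, hq] at hβ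
    have hsq : (a * β) ^ 2 = p ^ 2 := by rw [mul_pow, hβ, h]
    rcases sq_eq_sq_iff_eq_or_eq_neg.mp hsq with hp | hp
    · exact ⟨β, hβ₀, hp, hβ⟩
    · exact ⟨-β, neg_ne_zero.mpr hβ₀, by linear_combination -hp, by rw [neg_sq, hβ]⟩

end CubicConjugacy

theorem cubicP_eq (θ : ℝ) {c : ℂ} (hc : c ≠ 0) (z : ℂ) :
    cubicP θ c z = exp (2 * Real.pi * I * θ) * z
      + -(exp (2 * Real.pi * I * θ) * (c + 1)) / (2 * c) * z ^ 2
      + exp (2 * Real.pi * I * θ) / (3 * c) * z ^ 3 := by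
  unfold cubicP
  field_simp
  ring

theorem linearly_conjugate_iff (θ : ℝ) (c a : ℂ) (hc : c ≠ 0) :
    (∃ β : ℂ, β ≠ 0 ∧ ∀ z : ℂ, β * cubicP θ c z = cubicF θ a (β * z)) ↔
      a^2 = 3 * exp (2 * Real.pi * I * θ) / 4 * (c + 1/c + 2) := by
  set l := exp (2 * Real.pi * I * θ)
  have hl : l ≠ 0 := exp_ne_zero _
  calc (∃ β : ℂ, β ≠ 0 ∧ ∀ z : ℂ, β * cubicP θ c z = cubicF θ a (β * z))
      ↔ ∃ β, β ≠ 0 ∧ a * β = -(l * (c + 1)) / (2 * c) ∧ β ^ 2 = l / (3 * c) := by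
        refine exists_congr fun β => and_congr_right fun hβ => ?_
        simp only [cubicP_eq θ hc]
        exact forall_mul_cubic_eq_cubic_mul_iff hβ
    _ ↔ a ^ 2 * (l / (3 * c)) = (-(l * (c + 1)) / (2 * c)) ^ 2 :=
        exists_mul_eq_and_sq_eq_iff (by simp [hl, hc])
    _ ↔ a ^ 2 = 3 * l / 4 * (c + 1 / c + 2) := by
        field_simp
        ring_nf
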